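/- arXiv:1808.03633 — 3 statements merged into one kernel-verified Lean document; each statement's English description precedes it below -/
import Mathlib

section
/- Let G = (V,E) be a finite simple graph with |V| = n, let S ⊆ V be an independent set with |S| = k, let H be a real inner product space, and let x* : V → H be an optimal feasible C-SDP solution for G. Then ∑_{(u,v) ∈ S × S} ‖x*_u − x*_v‖² + 2 ∑_{(u,v) ∈ S × (V∖S)} ‖x*_u − x*_v‖² ≤ 4·k·(n − k). -/
open Finset

/-- A feasible solution to the crude SDP: unit vectors, pairwise nonnegative inner
products, and orthogonal vectors on edges. -/
def Feasible {V : Type*} {H : Type*} [NormedAddCommGroup H] [InnerProductSpace ℝ H]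
    (G : SimpleGraph V) (x : V → H) : Prop :=
  (∀ v, ‖x v‖ = 1) ∧ (∀ u v : V, (0 : ℝ) ≤ inner ℝ (x u) (x v)) ∧
    (∀ u v : V, G.Adj u v → (inner ℝ (x u) (x v) : ℝ) = 0)

/-- The crude SDP objective: the sum of squared distances over all ordered pairs. -/
noncomputable def obj {V : Type*} [Fintype V] {H : Type*} [NormedAddCommGroup H]
    [InnerProductSpace ℝ H] (x : V → H) : ℝ :=
  ∑ u : V, ∑ v : V, ‖x u - x v‖ ^ 2

/-!
The competitor that sends every vertex of the independent set `S` to one new unit vector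
`e = (0, 1) ⟂ H` and keeps `x` elsewhere is feasible. Its objective agrees with `obj x` on pairs
outside `S`, is `0` on `S × S` and `2` on each pair between `S` and its complement (since
`e` is orthogonal to the unit vectors `x v`). Optimality of `x` therefore bounds the
remaining terms of `obj x` by `4 k (n - k)`.
-/

theorem Finset.sum_univ_sum_univ_eq_of_symm {V M : Type*} [Fintype V] [DecidableEq V]
    [AddCommMonoid M] (S : Finset V) (f : V → V → M) (hf : ∀ u v, f u v = f v u) :
    ∑ u, ∑ v, f u v
      = ∑ u ∈ S, ∑ v ∈ S, f u v + 2 • ∑ u ∈ S, ∑ v ∈ Sᶜ, f u v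
        + ∑ u ∈ Sᶜ, ∑ v ∈ Sᶜ, f u v := by
  have hswap : ∑ u ∈ Sᶜ, ∑ v ∈ S, f u v = ∑ u ∈ S, ∑ v ∈ Sᶜ, f u v := by
    rw [Finset.sum_comm]
    exact sum_congr rfl fun u _ => sum_congr rfl fun v _ => hf v u
  simp only [← sum_add_sum_compl S, sum_add_distrib, hswap, two_nsmul]
  abel

section Collapse

variable {V H : Type*} [DecidableEq V] [NormedAddCommGroup H]

noncomputable def collapse (S : Finset V) (x : V → H) (v : V) : WithLp 2 (H × ℝ) :=
  if v ∈ S then WithLp.toLp 2 (0, 1) else WithLp.toLp 2 (x v, 0)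

theorem feasible_collapse [InnerProductSpace ℝ H] {G : SimpleGraph V} {x : V → H}
    (hx : Feasible G x) {S : Finset V} (hS : ∀ u ∈ S, ∀ v ∈ S, ¬ G.Adj u v) :
    Feasible G (collapse S x) := by
  obtain ⟨hnorm, hnonneg, hedge⟩ := hx
  refine ⟨fun v => ?_, fun u v => ?_, fun u v huv => ?_⟩
  · refine (pow_eq_one_iff_of_nonneg (norm_nonneg _) two_ne_zero).mp ?_
    unfold collapse
    split_ifs <;> simp [hnorm]
  · unfold collapse
    split_ifs <;> simp [hnonneg]
  · unfold collapse
    split_ifs with hu hv hv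
    · exact absurd huv (hS u hu v hv)
    all_goals simp [hedge u v huv]

theorem norm_collapse_sub_collapse_sq {x : V → H} (hx : ∀ v, ‖x v‖ = 1) (S : Finset V)
    (u v : V) :
    ‖collapse S x u - collapse S x v‖ ^ 2
      = if u ∈ S then (if v ∈ S then 0 else 2)
        else (if v ∈ S then 2 else ‖x u - x v‖ ^ 2) := by
  unfold collapse
  split_ifs <;> simp [← WithLp.toLp_sub, WithLp.prod_norm_sq_eq_of_L2, hx]
  all_goals norm_num

theorem obj_collapse [Fintype V] [InnerProductSpace ℝ H] {x : V → H} (hx : ∀ v, ‖x v‖ = 1)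
    (S : Finset V) :
    obj (collapse S x)
      = 4 * #S * #Sᶜ + ∑ u ∈ Sᶜ, ∑ v ∈ Sᶜ, ‖x u - x v‖ ^ 2 := by
  have hSS : ∑ u ∈ S, ∑ v ∈ S, ‖collapse S x u - collapse S x v‖ ^ 2 = 0 :=
    sum_eq_zero fun u hu => sum_eq_zero fun v hv => by
      simp [norm_collapse_sub_collapse_sq hx, hu, hv]
  have hSSc :
      ∑ u ∈ S, ∑ v ∈ Sᶜ, ‖collapse S x u - collapse S x v‖ ^ 2 = #S * #Sᶜ * 2 := by
    rw [sum_congr rfl fun u hu => sum_congr rfl fun v hv => by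
      rw [norm_collapse_sub_collapse_sq hx, if_pos hu, if_neg (mem_compl.mp hv)]]
    simp only [sum_const, nsmul_eq_mul]
    ring
  have hScSc : ∑ u ∈ Sᶜ, ∑ v ∈ Sᶜ, ‖collapse S x u - collapse S x v‖ ^ 2
      = ∑ u ∈ Sᶜ, ∑ v ∈ Sᶜ, ‖x u - x v‖ ^ 2 :=
    sum_congr rfl fun u hu => sum_congr rfl fun v hv => by
      simp [norm_collapse_sub_collapse_sq hx, mem_compl.mp hu, mem_compl.mp hv]
  rw [obj, sum_univ_sum_univ_eq_of_symm S _ fun u v => by rw [norm_sub_rev], hSS, hSSc, hScSc,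
    nsmul_eq_mul]
  push_cast
  ring

end Collapse

theorem stmt0 {V : Type*} [Fintype V] [DecidableEq V] (G : SimpleGraph V)
    {H : Type*} [NormedAddCommGroup H] [InnerProductSpace ℝ H]
    (n k : ℕ) (hn : Fintype.card V = n) (S : Finset V) (hk : S.card = k)
    (hind : ∀ u ∈ S, ∀ v ∈ S, ¬ G.Adj u v)
    (x : V → H) (hfeas : Feasible G x)
    (hopt : ∀ y : V → WithLp 2 (H × ℝ), Feasible G y → obj x ≤ obj y) :
    (∑ u ∈ S, ∑ v ∈ S, ‖x u - x v‖ ^ 2) + 2 * ∑ u ∈ S, ∑ v ∈ Sᶜ, ‖x u - x v‖ ^ 2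
      ≤ 4 * (k : ℝ) * ((n : ℝ) - k) := by
  have hcompl : (#Sᶜ : ℝ) = n - k := by
    rw [card_compl, Nat.cast_sub (card_le_univ S), hn, hk]
  have hle := hopt _ (feasible_collapse hfeas hind)
  rw [obj_collapse hfeas.1, obj, sum_univ_sum_univ_eq_of_symm S _
    fun u v => by rw [norm_sub_rev], hcompl, hk, nsmul_eq_mul] at hle
  push_cast at hle
  linarith
end

section
/- Let G = (V,E) be a finite simple graph, let S ⊆ V be an independent set with |S| = k ≥ 1, and suppose every vertex v ∈ V∖S has more than k/3 neighbors in S. Let H be a real inner product space, let x : V → H be a feasible C-SDP solution for G, and let u ∈ V be such that |{v ∈ S : ‖x_u − x_v‖² < 1/2}| ≥ (2/3)·k. Define B := {v ∈ V : ‖x_u − x_v‖² < 1/2}. Then B ⊆ S, and moreover S = {v ∈ V : v has no G-neighbor in B}. -/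
open Finset
open scoped Classical

theorem one_le_norm_sub_sq_add_norm_sub_sq {H : Type*} [NormedAddCommGroup H]
    [InnerProductSpace ℝ H] (a b c : H) (hb : ‖b‖ = 1) (hc : ‖c‖ = 1)
    (hbc : inner ℝ b c = (0 : ℝ)) : 1 ≤ ‖a - b‖ ^ 2 + ‖a - c‖ ^ 2 := by
  have hdist : ‖b - c‖ ^ 2 = 2 := by
    rw [norm_sub_sq_real, hb, hc, hbc]; norm_num
  have htri : ‖b - c‖ ≤ ‖a - b‖ + ‖a - c‖ := by
    simpa only [norm_sub_rev b a] using norm_sub_le_norm_sub_add_norm_sub b a c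
  nlinarith [norm_nonneg (b - c), sq_nonneg (‖a - b‖ - ‖a - c‖)]

theorem Finset.exists_mem_filter_and_of_card_lt_add {α : Type*} (s : Finset α)
    (p q : α → Prop) (h : #s < #(s.filter p) + #(s.filter q)) : ∃ a ∈ s, p a ∧ q a := by
  obtain ⟨a, ha⟩ := inter_nonempty_of_card_lt_card_add_card (filter_subset p s)
    (filter_subset q s) h
  simp only [mem_inter, mem_filter] at ha
  exact ⟨a, ha.1.1, ha.1.2, ha.2.2⟩

theorem stmt10_general {V : Type*} [Fintype V] (G : SimpleGraph V)
    (k : ℕ) (S : Finset V) (hk : S.card = k)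
    (hind : ∀ u ∈ S, ∀ v ∈ S, ¬ G.Adj u v)
    (hdeg : ∀ v, v ∉ S → (k : ℝ) / 3 < ((S.filter fun w => G.Adj v w).card : ℝ))
    {H : Type*} [NormedAddCommGroup H] [InnerProductSpace ℝ H]
    (x : V → H) (hfeas : Feasible G x)
    (u : V)
    (hu : (2 / 3 : ℝ) * k ≤ ((S.filter fun v => ‖x u - x v‖ ^ 2 < 1 / 2).card : ℝ)) :
    (Finset.univ.filter fun v => ‖x u - x v‖ ^ 2 < 1 / 2) ⊆ S ∧
      S = Finset.univ.filter fun v =>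
        ∀ w, ‖x u - x w‖ ^ 2 < 1 / 2 → ¬ G.Adj v w := by
  obtain ⟨hunit, -, horth⟩ := hfeas
  have hsees : ∀ v ∉ S, ∃ w ∈ S, G.Adj v w ∧ ‖x u - x w‖ ^ 2 < 1 / 2 := by
    intro v hv
    apply S.exists_mem_filter_and_of_card_lt_add
    have hcard : (#S : ℝ) <
        #(S.filter (G.Adj v)) + #(S.filter fun w => ‖x u - x w‖ ^ 2 < 1 / 2) := by
      linarith [hdeg v hv, (congrArg Nat.cast hk : (#S : ℝ) = k)]
    exact_mod_cast hcard
  have hball : ∀ v, ‖x u - x v‖ ^ 2 < 1 / 2 → v ∈ S := by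
    intro v hv
    by_contra hvS
    obtain ⟨w, -, hvw, hw⟩ := hsees v hvS
    have := one_le_norm_sub_sq_add_norm_sub_sq (x u) (x v) (x w) (hunit v) (hunit w)
      (horth v w hvw)
    linarith
  refine ⟨fun v hv => hball v (mem_filter.1 hv).2, ?_⟩
  ext v
  simp only [mem_filter, mem_univ, true_and]
  refine ⟨fun hv w hw => hind v hv w (hball w hw), fun h => ?_⟩
  by_contra hvS
  obtain ⟨w, -, hvw, hw⟩ := hsees v hvS
  exact h w hw hvw

theorem stmt10 {V : Type*} [Fintype V] [DecidableEq V] (G : SimpleGraph V)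
    (k : ℕ) (S : Finset V) (hk : S.card = k) (hk1 : 1 ≤ k)
    (hind : ∀ u ∈ S, ∀ v ∈ S, ¬ G.Adj u v)
    (hdeg : ∀ v, v ∉ S → (k : ℝ) / 3 < ((S.filter fun w => G.Adj v w).card : ℝ))
    {H : Type*} [NormedAddCommGroup H] [InnerProductSpace ℝ H]
    (x : V → H) (hfeas : Feasible G x)
    (u : V)
    (hu : (2 / 3 : ℝ) * k ≤ ((S.filter fun v => ‖x u - x v‖ ^ 2 < 1 / 2).card : ℝ)) :
    (Finset.univ.filter fun v => ‖x u - x v‖ ^ 2 < 1 / 2) ⊆ S ∧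
      S = Finset.univ.filter fun v =>
        ∀ w, ‖x u - x w‖ ^ 2 < 1 / 2 → ¬ G.Adj v w :=
  stmt10_general G k S hk hind hdeg x hfeas u hu
end

section
/- Let G = (V,E) be a finite simple graph, let S ⊆ V be an independent set with |S| = k ≥ 1, and suppose every vertex v ∈ V∖S has more than k/3 neighbors in S. Then every maximal independent set S' of G with S' ≠ S satisfies |S' ∩ S| < (2/3)·k. -/
open Finset
open scoped Classical

theorem stmt14 {V : Type*} [Fintype V] [DecidableEq V] (G : SimpleGraph V)
    (k : ℕ) (S : Finset V) (hk : S.card = k) (hk1 : 1 ≤ k)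
    (hindS : ∀ u ∈ S, ∀ v ∈ S, ¬ G.Adj u v)
    (hdeg : ∀ v, v ∉ S → (k : ℝ) / 3 < ((S.filter fun w => G.Adj v w).card : ℝ))
    (S' : Finset V)
    (hindS' : ∀ u ∈ S', ∀ v ∈ S', ¬ G.Adj u v)
    (hmax : ∀ w, w ∉ S' → ∃ u ∈ S', G.Adj w u)
    (hne : S' ≠ S) :
    ((S' ∩ S).card : ℝ) < (2 / 3 : ℝ) * k := by
  by_cases hsub : S ⊆ S'
  · -- S ⊊ S', get v ∈ S' \ S, it has a neighbor in S ⊆ S', contradiction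
    obtain ⟨v, hvS', hvS⟩ : ∃ v ∈ S', v ∉ S := by
      by_contra h
      push_neg at h
      exact hne (Finset.Subset.antisymm h hsub)
    have h1 := hdeg v hvS
    have hpos : (0:ℝ) < ((S.filter fun w => G.Adj v w).card : ℝ) := by
      have : (0:ℝ) < (k:ℝ)/3 := by positivity
      linarith
    have : (S.filter fun w => G.Adj v w).Nonempty := by
      rw [← Finset.card_pos]
      exact_mod_cast hpos
    obtain ⟨w, hw⟩ := this
    rw [Finset.mem_filter] at hw
    exact absurd hw.2 (hindS' v hvS' w (hsub hw.1))
  · obtain ⟨x, hxS, hxS'⟩ : ∃ x ∈ S, x ∉ S' := by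
      by_contra h; push_neg at h; exact hsub h
    obtain ⟨u, huS', hadj⟩ := hmax x hxS'
    have huS : u ∉ S := fun h => hindS x hxS u h hadj
    have hfil : (S.filter fun w => G.Adj u w) ⊆ S \ S' := by
      intro w hw
      rw [Finset.mem_filter] at hw
      rw [Finset.mem_sdiff]
      exact ⟨hw.1, fun hwS' => hindS' u huS' w hwS' hw.2⟩
    have h1 := hdeg u huS
    have h2 : ((S.filter fun w => G.Adj u w).card : ℝ) ≤ ((S \ S').card : ℝ) := by
      exact_mod_cast Finset.card_le_card hfil
    have h3 : (S \ S').card + (S ∩ S').card = S.card :=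
      Finset.card_sdiff_add_card_inter S S'
    have h4 : ((S ∩ S').card : ℝ) = (k:ℝ) - ((S \ S').card : ℝ) := by
      have := h3; rw [hk] at this
      have : ((S \ S').card : ℝ) + ((S ∩ S').card : ℝ) = (k:ℝ) := by exact_mod_cast this
      linarith
    rw [Finset.inter_comm]
    rw [h4]
    linarith
end
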